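/- Let φ : ℝ → ℂ be an integrable function, h > 0, n_f a positive even integer, L = n_f h, and define the periodization φ̃(x) = Σ_{n∈ℤ} φ(x + Ln). For a point r ∈ ℝ, the discrete Fourier transform of the spread samples satisfies: Σ_{ℓ=-n_f/2}^{n_f/2-1} e^{2πi k ℓ/n_f} φ̃(r - hℓ) = (1/h) Σ_{m∈ℤ} φ̂((2π/L)(k + m n_f)) e^{i(2π/L)(k + m n_f) r} for every integer k, where φ̂(ξ) = ∫_ℝ φ(x) e^{-iξx} dx, assuming φ̂ decays fast enough for Poisson summation to hold (e.g., φ Schwartz). -/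

import Mathlib

/-!
Poisson summation with period `L` expands `φ̃(r - hℓ)` as
`(1/L) Σ_m φ̂(2πm/L) e^{i (2πm/L)(r - hℓ)}`. Since `h/L = 1/n_f`, the shift by `hℓ` contributes
the phase `e^{-2πi mℓ/n_f}`, so the DFT in `ℓ` produces the character sum of `k - m` over the
`n_f` consecutive integers of the centred window. It equals `n_f` when `n_f ∣ k - m` and vanishes
otherwise, which leaves exactly the aliased frequencies `m = k + j n_f`, with weight `n_f/L = 1/h`.
-/

open Real MeasureTheory

noncomputable section

/-- Fourier transform with convention `φ̂(ξ) = ∫_ℝ φ(x) e^{-iξx} dx`. -/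
def fourierNeg (φ : ℝ → ℂ) (ξ : ℝ) : ℂ :=
  ∫ x : ℝ, φ x * Complex.exp (-(Complex.I * ξ * x))

open FourierTransform
open scoped SchwartzMap

theorem sum_Ico_zpow_eq_ite_of_pow_eq_one {K : Type*} [Field K] [DecidableEq K] {w : K} {n : ℕ}
    (hw : w ^ n = 1) (a : ℤ) :
    ∑ ℓ ∈ Finset.Ico a (a + n), w ^ ℓ = if w = 1 then (n : K) else 0 := by
  rcases eq_or_ne n 0 with rfl | hn
  · simp
  have hw0 : w ≠ 0 := by rintro rfl; simp [hn] at hw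
  have hshift : ∑ ℓ ∈ Finset.Ico a (a + n), w ^ ℓ = w ^ a * ∑ j ∈ Finset.range n, w ^ j := by
    rw [Int.Ico_eq_finset_map, Finset.sum_map, Finset.mul_sum, add_sub_cancel_left,
      Int.toNat_natCast]
    refine Finset.sum_congr rfl fun j _ => ?_
    simp [zpow_add₀ hw0]
  split_ifs with hw1
  · simp [hw1]
  · rw [hshift, geom_sum_eq hw1, hw, sub_self, zero_div, mul_zero]

theorem Complex.sum_Ico_exp_two_pi_I_mul_div_eq_ite {n : ℕ} (hn : n ≠ 0) (c a : ℤ) :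
    ∑ ℓ ∈ Finset.Ico a (a + n), Complex.exp (2 * π * Complex.I * c * ℓ / n)
      = if (n : ℤ) ∣ c then (n : ℂ) else 0 := by
  have hζ := Complex.isPrimitiveRoot_exp n hn
  have hterm : ∀ ℓ : ℤ, Complex.exp (2 * π * Complex.I * c * ℓ / n)
      = (Complex.exp (2 * π * Complex.I / n) ^ c) ^ ℓ := by
    intro ℓ
    rw [← zpow_mul, ← Complex.exp_int_mul]
    congr 1
    push_cast
    ring
  have hpow : (Complex.exp (2 * π * Complex.I / n) ^ c) ^ n = 1 := by
    rw [← zpow_natCast, ← zpow_mul, mul_comm c, zpow_mul, zpow_natCast, hζ.pow_eq_one, one_zpow]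
  simp_rw [hterm]
  rw [sum_Ico_zpow_eq_ite_of_pow_eq_one hpow a]
  exact if_congr (hζ.zpow_eq_one_iff_dvd c) rfl rfl

theorem Int.Icc_neg_div_two_eq_Ico_of_even {n : ℤ} (hn : Even n) :
    Finset.Icc (-n / 2) (n / 2 - 1) = Finset.Ico (-n / 2) (-n / 2 + n) := by
  obtain ⟨t, rfl⟩ := hn
  ext ℓ
  simp only [Finset.mem_Icc, Finset.mem_Ico]
  omega

theorem tsum_ite_dvd_sub_eq_tsum_add_mul {α : Type*} [AddCommMonoid α] [TopologicalSpace α]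
    (f : ℤ → α) {n : ℤ} (hn : n ≠ 0) (k : ℤ) :
    ∑' m : ℤ, (if n ∣ k - m then f m else 0) = ∑' j : ℤ, f (k + j * n) := by
  have hinj : Function.Injective fun j : ℤ => k + j * n := fun i j hij =>
    mul_right_cancel₀ hn (add_left_cancel hij)
  have hsupp : Function.support (fun m : ℤ => if n ∣ k - m then f m else 0)
      ⊆ Set.range fun j : ℤ => k + j * n := by
    intro m hm
    by_cases hdvd : n ∣ k - m
    · obtain ⟨t, ht⟩ := hdvd
      exact ⟨-t, by linear_combination ht⟩
    · exact absurd (if_neg hdvd) hm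
  rw [← hinj.tsum_eq hsupp]
  refine tsum_congr fun j => ?_
  rw [if_pos ⟨-j, by ring⟩]

theorem Real.fourier_comp_mul_left_eq_fourierNeg (φ : ℝ → ℂ) {L : ℝ} (hL : L ≠ 0) (w : ℝ) :
    𝓕 (fun x => φ (L * x)) w = |L|⁻¹ * fourierNeg φ (2 * π / L * w) := by
  have hLC : (L : ℂ) ≠ 0 := Complex.ofReal_ne_zero.mpr hL
  rw [Real.fourier_real_eq_integral_exp_smul]
  have hintegrand : ∀ v : ℝ, Complex.exp (↑(-2 * π * v * w) * Complex.I) • φ (L * v)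
      = φ (L * v) * Complex.exp (-(Complex.I * ((2 * π / L * w : ℝ) : ℂ) * ((L * v : ℝ) : ℂ))) := by
    intro v
    rw [smul_eq_mul, mul_comm]
    congr 2
    push_cast
    field_simp
  simp_rw [hintegrand]
  rw [Measure.integral_comp_mul_left (fun u : ℝ =>
    φ u * Complex.exp (-(Complex.I * ((2 * π / L * w : ℝ) : ℂ) * (u : ℂ)))), abs_inv,
    Complex.real_smul, Complex.ofReal_inv, fourierNeg]

theorem SchwartzMap.hasSum_fourierNeg_mul_exp (φ : 𝓢(ℝ, ℂ)) {L : ℝ} (hL : 0 < L) (x : ℝ) :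
    HasSum (fun m : ℤ => fourierNeg φ (2 * π / L * m)
        * Complex.exp (Complex.I * ((2 * π / L * m : ℝ) : ℂ) * x) / L)
      (∑' n : ℤ, φ (x + L * n)) := by
  let g : 𝓢(ℝ, ℂ) := SchwartzMap.compCLMOfContinuousLinearEquiv ℝ
    (LinearEquiv.smulOfNeZero ℝ ℝ L hL.ne').toContinuousLinearEquiv φ
  have hg : ∀ y, g y = φ (L * y) := fun _ => rfl
  have hcoeff : ∀ m : ℤ, 𝓕 g m * fourier m (x / L : UnitAddCircle)
      = fourierNeg φ (2 * π / L * m)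
        * Complex.exp (Complex.I * ((2 * π / L * m : ℝ) : ℂ) * x) / L := by
    intro m
    rw [show 𝓕 g m = 𝓕 (fun y => φ (L * y)) m from rfl,
      Real.fourier_comp_mul_left_eq_fourierNeg _ hL.ne', abs_of_pos hL, fourier_coe_apply]
    push_cast
    field_simp
  have hsummable : Summable fun m : ℤ => 𝓕 g m * fourier m (x / L : UnitAddCircle) := by
    refine Summable.of_norm_bounded (g := fun m : ℤ => ‖𝓕 g m‖) ?_ fun m => ?_
    · exact summable_of_isBigO (Real.summable_abs_int_rpow one_lt_two)
        (((𝓕 g).isBigO_cocompact_rpow (-2)).comp_tendsto Int.tendsto_coe_cofinite).norm_left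
    · rw [norm_mul]
      exact mul_le_of_le_one_right (norm_nonneg _)
        ((ContinuousMap.norm_coe_le_norm _ _).trans (fourier_norm m).le)
  have hpoisson : ∑' n : ℤ, φ (x + L * n)
      = ∑' m : ℤ, 𝓕 g m * fourier m (x / L : UnitAddCircle) := by
    rw [← SchwartzMap.tsum_eq_tsum_fourier g (x / L)]
    refine tsum_congr fun n => ?_
    rw [hg]
    congr 1
    field_simp
  rw [hpoisson]
  simpa only [hcoeff] using hsummable.hasSum

theorem exp_dft_mul_exp_sub_grid {nf : ℕ} (hnf : nf ≠ 0) {h L : ℝ} (hh : h ≠ 0) (hL : L = nf * h)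
    (k m ℓ : ℤ) (r : ℝ) :
    Complex.exp (2 * π * Complex.I * k * ℓ / nf)
        * Complex.exp (Complex.I * ((2 * π / L * m : ℝ) : ℂ) * ((r - h * ℓ : ℝ) : ℂ))
      = Complex.exp (Complex.I * ((2 * π / L * m : ℝ) : ℂ) * r)
        * Complex.exp (2 * π * Complex.I * (k - m : ℤ) * ℓ / nf) := by
  have hnfC : (nf : ℂ) ≠ 0 := by exact_mod_cast hnf
  have hhC : (h : ℂ) ≠ 0 := by exact_mod_cast hh
  rw [← Complex.exp_add, ← Complex.exp_add, hL]
  congr 1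
  push_cast
  field_simp
  ring

/-- The 1D aliasing identity for particle-mesh spreading: for a Schwartz window `φ`,
grid spacing `h > 0`, even `n_f > 0` and `L = n_f h`, the DFT of the samples of the
periodization `φ̃(x) = Σ_n φ(x+Ln)` shifted by `r` equals the sum of the true Fourier
coefficient and its aliased images at frequencies shifted by multiples of `2π n_f/L`. -/
theorem spreading_aliasing_identity (φ : SchwartzMap ℝ ℂ) (h : ℝ) (hh : 0 < h)
    (nf : ℕ) (hnf : 0 < nf) (hEven : Even nf) (L : ℝ) (hL : L = nf * h)
    (φt : ℝ → ℂ) (hφt : ∀ x, φt x = ∑' n : ℤ, φ (x + L * n)) (r : ℝ) :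
    ∀ k : ℤ,
      ∑ ℓ ∈ Finset.Icc (-(nf : ℤ) / 2) ((nf : ℤ) / 2 - 1),
        Complex.exp (2 * π * Complex.I * k * ℓ / nf) * φt (r - h * ℓ)
      = (1 / (h : ℂ)) * ∑' m : ℤ,
          fourierNeg (fun x => φ x) ((2 * π / L) * (k + m * nf))
            * Complex.exp (Complex.I * (((2 * π / L) * (k + m * nf) : ℝ)) * r) := by
  intro k
  have hLpos : 0 < L := by rw [hL]; positivity
  set c : ℤ → ℂ := fun m => fourierNeg φ (2 * π / L * m)
    * Complex.exp (Complex.I * ((2 * π / L * m : ℝ) : ℂ) * r) / L with hc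
  rw [Int.Icc_neg_div_two_eq_Ico_of_even (by exact_mod_cast hEven.natCast)]
  have hdft : HasSum (fun m => c m * ∑ ℓ ∈ Finset.Ico (-(nf : ℤ) / 2) (-(nf : ℤ) / 2 + nf),
      Complex.exp (2 * π * Complex.I * (k - m : ℤ) * ℓ / nf))
      (∑ ℓ ∈ Finset.Ico (-(nf : ℤ) / 2) (-(nf : ℤ) / 2 + nf),
        Complex.exp (2 * π * Complex.I * k * ℓ / nf) * φt (r - h * ℓ)) := by
    simp only [Finset.mul_sum]
    refine hasSum_sum fun ℓ _ => ?_
    rw [hφt]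
    refine ((φ.hasSum_fourierNeg_mul_exp hLpos (r - h * ℓ)).mul_left
      (Complex.exp (2 * π * Complex.I * k * ℓ / nf))).congr_fun fun m => ?_
    simp only [hc]
    linear_combination (fourierNeg φ (2 * π / L * m) / L)
      * (exp_dft_mul_exp_sub_grid hnf.ne' hh.ne' hL k m ℓ r).symm
  rw [← hdft.tsum_eq]
  simp only [Complex.sum_Ico_exp_two_pi_I_mul_div_eq_ite hnf.ne', mul_ite, mul_zero]
  rw [tsum_ite_dvd_sub_eq_tsum_add_mul _ (by exact_mod_cast hnf.ne'), ← tsum_mul_left]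
  refine tsum_congr fun j => ?_
  have hnfC : (nf : ℂ) ≠ 0 := by exact_mod_cast hnf.ne'
  simp only [hc, hL]
  push_cast
  field_simp

end
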